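/- arXiv:2003.05772 — 4 statements merged into one kernel-verified Lean document; each statement's English description precedes it below -/
import Mathlib

section
/- Fix a ∈ (0,1) and let θ_c = a - 1 - log a > 0. For every θ ≤ θ_c the equation x = e^{θ + a(x-1)} has at least one real solution x, and for θ < θ_c it has exactly two solutions; moreover the minimal solution x*(θ) satisfies x*(θ) < 1/a. -/
open Real

private lemma no_three_zeros (a c : ℝ) (ha : 0 < a) {z1 z2 z3 : ℝ}
    (h12 : z1 < z2) (h23 : z2 < z3)
    (e1 : z1 = Real.exp (c + a * z1)) (e2 : z2 = Real.exp (c + a * z2))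
    (e3 : z3 = Real.exp (c + a * z3)) : False := by
  have hu12 : a * z1 < a * z2 := by nlinarith
  have hu23 : a * z2 < a * z3 := by nlinarith
  have hs := strictConvexOn_exp.slope_strict_mono_adjacent
    (Set.mem_univ (a * z1)) (Set.mem_univ (a * z3)) hu12 hu23
  have hexp : ∀ z : ℝ, z = Real.exp (c + a * z) →
      Real.exp (a * z) = z * Real.exp (-c) := by
    intro z hz
    have : Real.exp (c + a * z) = Real.exp c * Real.exp (a * z) := Real.exp_add _ _
    rw [hz] at *
    rw [Real.exp_neg]
    field_simp
    nlinarith [Real.exp_pos c, this]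
  rw [hexp z1 e1, hexp z2 e2, hexp z3 e3] at hs
  have h1 : (z2 * Real.exp (-c) - z1 * Real.exp (-c)) / (a * z2 - a * z1)
      = Real.exp (-c) / a := by
    rw [show z2 * Real.exp (-c) - z1 * Real.exp (-c) = (z2 - z1) * Real.exp (-c) by ring,
      show a * z2 - a * z1 = a * (z2 - z1) by ring]
    rw [mul_comm a (z2 - z1), mul_div_mul_left _ _ (by linarith : z2 - z1 ≠ 0)]
  have h2 : (z3 * Real.exp (-c) - z2 * Real.exp (-c)) / (a * z3 - a * z2)
      = Real.exp (-c) / a := by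
    rw [show z3 * Real.exp (-c) - z2 * Real.exp (-c) = (z3 - z2) * Real.exp (-c) by ring,
      show a * z3 - a * z2 = a * (z3 - z2) by ring]
    rw [mul_comm a (z3 - z2), mul_div_mul_left _ _ (by linarith : z3 - z2 ≠ 0)]
  rw [h1, h2] at hs
  exact lt_irrefl _ hs

theorem fixed_point_solutions (a : ℝ) (ha : a ∈ Set.Ioo (0 : ℝ) 1)
    (θc : ℝ) (hθc : θc = a - 1 - Real.log a) :
    (0 < θc) ∧
    (∀ θ ≤ θc, ∃ x : ℝ, x = Real.exp (θ + a * (x - 1))) ∧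
    (∀ θ < θc,
      (∃ x y : ℝ, x ≠ y ∧ x = Real.exp (θ + a * (x - 1)) ∧ y = Real.exp (θ + a * (y - 1)) ∧
        ∀ z : ℝ, z = Real.exp (θ + a * (z - 1)) → z = x ∨ z = y) ∧
      (∃ x : ℝ, x = Real.exp (θ + a * (x - 1)) ∧ x < 1 / a ∧
        ∀ z : ℝ, z = Real.exp (θ + a * (z - 1)) → x ≤ z)) := by
  obtain ⟨ha0, ha1⟩ := ha
  have hloga : Real.log a < a - 1 := Real.log_lt_sub_one_of_pos ha0 (ne_of_lt ha1)
  have hθc0 : 0 < θc := by rw [hθc]; linarith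
  have ha0' : (0:ℝ) < 1 / a := by positivity
  -- rewriting of the fixed point equation
  have key : ∀ θ x : ℝ, Real.exp (θ + a * (x - 1)) = Real.exp ((θ - a) + a * x) := by
    intro θ x; ring_nf
  -- value at 1/a
  have hval : ∀ θ : ℝ, Real.exp ((θ - a) + a * (1/a)) = Real.exp (θ - θc) / a := by
    intro θ
    rw [show (θ - a) + a * (1/a) = (θ - θc) + (-Real.log a) by
      field_simp; rw [hθc]; ring]
    rw [Real.exp_add, Real.exp_neg, Real.exp_log ha0]
    ring
  have hcont : ∀ θ : ℝ, Continuous fun x : ℝ => Real.exp ((θ - a) + a * x) - x := by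
    intro θ; fun_prop
  refine ⟨hθc0, ?_, ?_⟩
  · -- existence for θ ≤ θc
    intro θ hθ
    set g : ℝ → ℝ := fun x => Real.exp ((θ - a) + a * x) - x with hg
    have hg0 : 0 < g 0 := by simp [hg]; positivity
    have hg1 : g (1/a) ≤ 0 := by
      simp only [hg]
      rw [hval θ]
      have : Real.exp (θ - θc) ≤ 1 := Real.exp_le_one_iff.mpr (by linarith)
      rw [sub_nonpos]
      gcongr
    have : (0:ℝ) ∈ Set.Icc (g (1/a)) (g 0) := ⟨hg1, le_of_lt hg0⟩
    obtain ⟨x, _, hx⟩ := intermediate_value_Icc' (le_of_lt ha0') (hcont θ).continuousOn this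
    have hx' : Real.exp ((θ - a) + a * x) - x = 0 := hx
    exact ⟨x, by rw [key θ x]; linarith⟩
  · -- two solutions for θ < θc
    intro θ hθ
    set c := θ - a with hc
    set g : ℝ → ℝ := fun x => Real.exp (c + a * x) - x with hg
    have hg0 : 0 < g 0 := by simp [hg]; positivity
    have hg1 : g (1/a) < 0 := by
      simp only [hg, hc]
      rw [hval θ]
      have : Real.exp (θ - θc) < 1 := Real.exp_lt_one_iff.mpr (by linarith)
      rw [sub_neg]
      exact div_lt_div_of_pos_right this ha0 |>.trans_eq (by ring)
    -- a large point where g is positive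
    set t0 := Real.log (2 / a) with ht0
    set X := max (1/a + 1) ((2/a) * (t0 - 1 - c) + 1) with hX
    have hXa : 1/a < X := lt_of_lt_of_le (by linarith) (le_max_left _ _)
    have hgX : 0 < g X := by
      have het0 : Real.exp t0 = 2 / a := Real.exp_log (by positivity)
      have htangent : Real.exp t0 * (1 + (c + a * X - t0)) ≤ Real.exp (c + a * X) := by
        have h := Real.add_one_le_exp (c + a * X - t0)
        calc Real.exp t0 * (1 + (c + a * X - t0))
            ≤ Real.exp t0 * Real.exp (c + a * X - t0) := by
              apply mul_le_mul_of_nonneg_left (by linarith) (le_of_lt (Real.exp_pos _))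
          _ = Real.exp (c + a * X) := by rw [← Real.exp_add]; ring_nf
      have hXbig : (2/a) * (t0 - 1 - c) + 1 ≤ X := le_max_right _ _
      have : Real.exp t0 * (1 + (c + a * X - t0)) = 2 * X + (2/a) * (1 + c - t0) := by
        rw [het0]; field_simp; ring
      simp only [hg]
      have hsum : 2/a*(t0 - 1 - c) + 2/a*(1 + c - t0) = 0 := by ring
      have h1 : 2 * X + 2/a * (1 + c - t0) ≤ Real.exp (c + a * X) := this ▸ htangent
      linarith [h1, hXbig, hsum]
    -- the two zeros
    obtain ⟨x, hxmem, hx⟩ := intermediate_value_Icc' (le_of_lt ha0')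
      (hcont θ).continuousOn (⟨le_of_lt hg1, le_of_lt hg0⟩ : (0:ℝ) ∈ Set.Icc (g (1/a)) (g 0))
    obtain ⟨y, hymem, hy⟩ := intermediate_value_Icc (le_of_lt hXa)
      (hcont θ).continuousOn (⟨le_of_lt hg1, le_of_lt hgX⟩ : (0:ℝ) ∈ Set.Icc (g (1/a)) (g X))
    have hxeq : x = Real.exp (c + a * x) := by simp only [hg] at hx; linarith
    have hyeq : y = Real.exp (c + a * y) := by simp only [hg] at hy; linarith
    have hxlt : x < 1 / a := by
      rcases lt_or_eq_of_le hxmem.2 with h | h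
      · exact h
      · exfalso; rw [h] at hx; simp only [hg] at hx; linarith [hg1]
    have hylt : 1 / a < y := by
      rcases lt_or_eq_of_le hymem.1 with h | h
      · exact h
      · exfalso; rw [← h] at hy; simp only [hg] at hy; linarith [hg1]
    have hxy : x < y := lt_trans hxlt hylt
    have huniq : ∀ z : ℝ, z = Real.exp (θ + a * (z - 1)) → z = x ∨ z = y := by
      intro z hz
      rw [key θ z] at hz
      rcases lt_trichotomy z x with h | h | h
      · exact absurd (no_three_zeros a c ha0 h hxy hz hxeq hyeq) (by simp)
      · exact Or.inl h
      · rcases lt_trichotomy z y with h' | h' | h'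
        · exact absurd (no_three_zeros a c ha0 h h' hxeq hz hyeq) (by simp)
        · exact Or.inr h'
        · exact absurd (no_three_zeros a c ha0 hxy h' hxeq hyeq hz) (by simp)
    refine ⟨⟨x, y, ne_of_lt hxy, by rw [key θ x]; exact hxeq, by rw [key θ y]; exact hyeq,
        huniq⟩, ⟨x, by rw [key θ x]; exact hxeq, hxlt, ?_⟩⟩
    intro z hz
    by_contra hlt
    push_neg at hlt
    rw [key θ z] at hz
    exact no_three_zeros a c ha0 hlt hxy hz hxeq hyeq
end

section
/- Fix a ∈ (0,1) and let x*(θ) be the minimal solution of x = e^{θ + a(x-1)} for θ < θ_c := a - 1 - log a. Then x*(θ) → 1/a and x*'(θ) = x*(θ)/(1 - a x*(θ)) → +∞ as θ → θ_c from below (steepness of the limiting cumulant generating function). -/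
/-!
For `θ < θc` the map `x ↦ exp (θ + a (x - 1))` sends `1 / a` strictly below itself, so it has a
fixed point in `(0, 1 / a)` and the minimal one satisfies `t := a x*(θ) ∈ (0, 1)`. Taking logarithms
of the fixed-point equation gives `θc - θ = t - 1 - log t ≥ (1 - t) ^ 2 / 2`, so `1 - a x*(θ)`
decreases to `0` at rate `√(2 (θc - θ))`, which yields both limits.
-/

open Real Set Filter Topology

lemma sq_one_sub_div_two_le_sub_one_sub_log {t : ℝ} (ht₀ : 0 < t) (ht₁ : t ≤ 1) :
    (1 - t) ^ 2 / 2 ≤ t - 1 - log t := by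
  have hu : |1 - t| < 1 := by rw [abs_lt]; constructor <;> linarith
  have hlog := hasSum_pow_div_log_of_abs_lt_one hu
  rw [sub_sub_cancel] at hlog
  -- `-log t = ∑ (1 - t) ^ (n + 1) / (n + 1)` has nonnegative terms; keep the first two
  have hu₀ : 0 ≤ 1 - t := by linarith
  have := sum_le_hasSum (Finset.range 2) (fun n _ => by positivity) hlog
  norm_num [Finset.sum_range_succ] at this
  linarith

lemma exists_eq_exp_mem_Ioo {a θ : ℝ} (ha : 0 < a) (hθ : θ < a - 1 - log a) :
    ∃ z ∈ Ioo 0 (1 / a), z = exp (θ + a * (z - 1)) := by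
  have hcont : ContinuousOn (fun x => x - exp (θ + a * (x - 1))) (Icc 0 (1 / a)) := by
    fun_prop
  have hend : exp (θ + a * (1 / a - 1)) < 1 / a := by
    have : θ + a * (1 / a - 1) < log (1 / a) := by
      rw [one_div, log_inv]; field_simp; linarith
    calc exp (θ + a * (1 / a - 1)) < exp (log (1 / a)) := exp_lt_exp.2 this
      _ = 1 / a := exp_log (one_div_pos.2 ha)
  obtain ⟨z, hz, hz0⟩ := intermediate_value_Ioo (one_div_pos.2 ha).le hcont
    (⟨by simpa using exp_pos _, by linarith⟩ : (0 : ℝ) ∈ Ioo _ _)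
  exact ⟨z, hz, sub_eq_zero.1 hz0⟩

lemma sq_one_sub_mul_div_two_le_of_eq_exp {a θ x : ℝ} (ha : 0 < a)
    (hx : x = exp (θ + a * (x - 1))) (hax : a * x ≤ 1) :
    (1 - a * x) ^ 2 / 2 ≤ a - 1 - log a - θ := by
  have hx₀ : 0 < x := hx ▸ exp_pos _
  have hlog : log (a * x) = log a + θ + a * (x - 1) := by
    rw [log_mul ha.ne' hx₀.ne', hx, log_exp, ← hx]; ring
  have := sq_one_sub_div_two_le_sub_one_sub_log (mul_pos ha hx₀) hax
  rw [hlog] at this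
  linarith

lemma tendsto_nhdsGT_zero_of_sq_le {f : ℝ → ℝ} {c : ℝ}
    (hf : ∀ θ < c, 0 < f θ ∧ f θ ^ 2 ≤ 2 * (c - θ)) :
    Tendsto f (𝓝[<] c) (𝓝[>] 0) := by
  have hbound : Tendsto (fun θ => √(2 * (c - θ))) (𝓝[<] c) (𝓝 0) := by
    have : Tendsto (fun θ => √(2 * (c - θ))) (𝓝 c) (𝓝 √(2 * (c - c))) :=
      (by fun_prop : Continuous fun θ => √(2 * (c - θ))).tendsto c
    simpa using this.mono_left nhdsWithin_le_nhds
  refine tendsto_nhdsWithin_iff.2 ⟨squeeze_zero' ?_ ?_ hbound, ?_⟩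
  · filter_upwards [self_mem_nhdsWithin] with θ hθ using (hf θ hθ).1.le
  · filter_upwards [self_mem_nhdsWithin] with θ hθ
    exact (le_sqrt' (hf θ hθ).1).2 (hf θ hθ).2
  · filter_upwards [self_mem_nhdsWithin] with θ hθ using (hf θ hθ).1

theorem steepness (a : ℝ) (ha : a ∈ Set.Ioo (0 : ℝ) 1)
    (θc : ℝ) (hθc : θc = a - 1 - Real.log a)
    (xs : ℝ → ℝ)
    (hxs : ∀ θ < θc, xs θ = Real.exp (θ + a * (xs θ - 1)) ∧
      ∀ z : ℝ, z = Real.exp (θ + a * (z - 1)) → xs θ ≤ z) :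
    Filter.Tendsto xs (nhdsWithin θc (Set.Iio θc)) (nhds (1 / a)) ∧
    Filter.Tendsto (fun θ => xs θ / (1 - a * xs θ)) (nhdsWithin θc (Set.Iio θc))
      Filter.atTop := by
  have ha₀ : 0 < a := ha.1
  have hgap : Tendsto (fun θ => 1 - a * xs θ) (𝓝[<] θc) (𝓝[>] 0) := by
    refine tendsto_nhdsGT_zero_of_sq_le fun θ hθ => ?_
    obtain ⟨hfix, hmin⟩ := hxs θ hθ
    obtain ⟨z, hz, hzfix⟩ := exists_eq_exp_mem_Ioo ha₀ (hθc ▸ hθ)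
    have hax : a * xs θ < 1 := by
      have := (lt_div_iff₀' ha₀).1 ((hmin z hzfix).trans_lt hz.2)
      linarith
    have := sq_one_sub_mul_div_two_le_of_eq_exp ha₀ hfix hax.le
    exact ⟨by linarith, by linarith⟩
  have hlim : Tendsto xs (𝓝[<] θc) (𝓝 (1 / a)) := by
    have := ((tendsto_const_nhds (x := (1 : ℝ))).sub
      (hgap.mono_right nhdsWithin_le_nhds)).div_const a
    refine (this.congr fun θ => ?_).trans (by simp)
    field_simp; ring
  exact ⟨hlim, hlim.pos_mul_atTop (one_div_pos.2 ha₀) (tendsto_inv_nhdsGT_zero.comp hgap)⟩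
end

section
/- Fix a ∈ (0,1), ν > 0, and θ ≤ 0. Define f₀(θ) = θ and f_{n+1}(θ) = θ + a(e^{f_n(θ)} - 1). Then (1/t) Σ_{s=0}^{t-1} ν(e^{f_s(θ)} - 1) converges as t → ∞ to ν(x*(θ) - 1), where x*(θ) is the minimal solution of x = e^{θ + a(x-1)}. -/
/-!
In the logarithmic variable `y = log x` the fixed-point equation `x = exp (θ + a (x - 1))` becomes
`y = g y` with `g y = θ + a (exp y - 1)`, and `f n = g^[n] θ`. Since `g` is monotone and
`g θ ≤ θ`, the iterates decrease; they are bounded below by `θ - a`, so they converge to a fixed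
point `L ≤ θ ≤ 0`. On `(-∞, 0]` the map `g` is an `a`-contraction with `a < 1`, so no fixed point
lies below `L`: `exp L` is the minimal solution. Cesàro averaging preserves the limit.
-/

open Filter Topology Function Real

theorem exp_sub_exp_le_sub_of_nonpos {x y : ℝ} (hyx : y ≤ x) (hx : x ≤ 0) :
    exp x - exp y ≤ x - y := by
  have hy : exp x * (1 + (y - x)) ≤ exp y := by
    calc exp x * (1 + (y - x)) ≤ exp x * exp (y - x) := by
          gcongr; linarith [add_one_le_exp (y - x)]
      _ = exp y := by rw [← exp_add, add_sub_cancel]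
  nlinarith [exp_le_one_iff.2 hx, exp_pos x]

theorem Monotone.tendsto_isFixedPt_of_map_le {α : Type*} [ConditionallyCompleteLinearOrder α]
    [TopologicalSpace α] [OrderTopology α] {g : α → α} (hg : Monotone g) (hgc : Continuous g)
    (hbdd : BddBelow (Set.range g)) {x : α} (hx : g x ≤ x) :
    ∃ L, L ≤ x ∧ IsFixedPt g L ∧ Tendsto (fun n => g^[n] x) atTop (𝓝 L) := by
  obtain ⟨m, hm⟩ := hbdd
  have horbit : BddBelow (Set.range fun n => g^[n] x) := by
    refine ⟨min m x, ?_⟩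
    rintro _ ⟨_ | n, rfl⟩
    · exact min_le_right m x
    · show min m x ≤ g^[n + 1] x
      rw [iterate_succ_apply']
      exact (min_le_left m x).trans (hm ⟨_, rfl⟩)
  have hlim := tendsto_atTop_ciInf (hg.antitone_iterate_of_map_le hx) horbit
  exact ⟨_, ciInf_le horbit 0, isFixedPt_of_tendsto_iterate hlim hgc.continuousAt, hlim⟩

noncomputable def hawkesMap (a θ : ℝ) (y : ℝ) : ℝ := θ + a * (exp y - 1)

section hawkesMap

variable {a θ : ℝ}

theorem continuous_hawkesMap : Continuous (hawkesMap a θ) := by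
  unfold hawkesMap; fun_prop

theorem hawkesMap_monotone (ha : 0 ≤ a) : Monotone (hawkesMap a θ) := fun _ _ hxy => by
  unfold hawkesMap; gcongr

theorem hawkesMap_le_of_nonpos (ha : 0 ≤ a) {y : ℝ} (hy : y ≤ 0) : hawkesMap a θ y ≤ θ := by
  unfold hawkesMap
  nlinarith [exp_le_one_iff.2 hy]

theorem sub_le_hawkesMap (ha : 0 ≤ a) (y : ℝ) : θ - a ≤ hawkesMap a θ y := by
  unfold hawkesMap
  nlinarith [exp_pos y]

theorem hawkesMap_sub_le (ha : 0 ≤ a) {x y : ℝ} (hyx : y ≤ x) (hx : x ≤ 0) :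
    hawkesMap a θ x - hawkesMap a θ y ≤ a * (x - y) := by
  unfold hawkesMap
  nlinarith [exp_sub_exp_le_sub_of_nonpos hyx hx]

theorem le_of_isFixedPt_hawkesMap (ha : a ∈ Set.Ioo 0 1) {L μ : ℝ}
    (hL : IsFixedPt (hawkesMap a θ) L) (hL0 : L ≤ 0) (hμ : IsFixedPt (hawkesMap a θ) μ) :
    L ≤ μ := by
  by_contra! hμL
  have := hawkesMap_sub_le (θ := θ) ha.1.le hμL.le hL0
  rw [hL.eq, hμ.eq] at this
  nlinarith [ha.2]

theorem isFixedPt_hawkesMap_log {z : ℝ} (hz : z = exp (θ + a * (z - 1))) :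
    IsFixedPt (hawkesMap a θ) (log z) := by
  have hz' : exp (log z) = z := exp_log (hz ▸ exp_pos _)
  rw [IsFixedPt, hawkesMap, hz', hz, log_exp, ← hz]

theorem eq_iterate_hawkesMap {f : ℕ → ℝ} (hf0 : f 0 = θ)
    (hfr : ∀ n : ℕ, f (n + 1) = θ + a * (exp (f n) - 1)) (n : ℕ) :
    f n = (hawkesMap a θ)^[n] θ := by
  induction n with
  | zero => exact hf0
  | succ n ih => rw [hfr, iterate_succ_apply', ← ih, hawkesMap]

end hawkesMap

theorem limiting_log_mgf_general (a ν θ : ℝ) (ha : a ∈ Set.Ioo (0 : ℝ) 1) (hθ : θ ≤ 0)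
    (f : ℕ → ℝ) (hf0 : f 0 = θ)
    (hfr : ∀ n : ℕ, f (n + 1) = θ + a * (Real.exp (f n) - 1)) :
    ∃ xs : ℝ, (xs = Real.exp (θ + a * (xs - 1)) ∧
        ∀ z : ℝ, z = Real.exp (θ + a * (z - 1)) → xs ≤ z) ∧
      Filter.Tendsto
        (fun t : ℕ => (1 / (t : ℝ)) * ∑ s ∈ Finset.range t, ν * (Real.exp (f s) - 1))
        Filter.atTop (nhds (ν * (xs - 1))) := by
  obtain ⟨L, hLθ, hfix, hlim⟩ := (hawkesMap_monotone ha.1.le).tendsto_isFixedPt_of_map_le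
    continuous_hawkesMap ⟨θ - a, by rintro _ ⟨y, rfl⟩; exact sub_le_hawkesMap ha.1.le y⟩
    (hawkesMap_le_of_nonpos ha.1.le hθ)
  rw [← funext (eq_iterate_hawkesMap hf0 hfr)] at hlim
  refine ⟨exp L, ⟨congrArg exp hfix.eq.symm, fun z hz => ?_⟩, ?_⟩
  · rw [← exp_log (hz ▸ exp_pos _ : 0 < z)]
    exact exp_le_exp.2 <|
      le_of_isFixedPt_hawkesMap ha hfix (hLθ.trans hθ) (isFixedPt_hawkesMap_log hz)
  · simpa only [one_div, comp_apply] using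
      (((continuous_exp.tendsto L).comp hlim).sub_const 1).const_mul ν |>.cesaro

theorem limiting_log_mgf (a ν θ : ℝ) (ha : a ∈ Set.Ioo (0 : ℝ) 1) (hν : 0 < ν) (hθ : θ ≤ 0)
    (f : ℕ → ℝ) (hf0 : f 0 = θ)
    (hfr : ∀ n : ℕ, f (n + 1) = θ + a * (Real.exp (f n) - 1)) :
    ∃ xs : ℝ, (xs = Real.exp (θ + a * (xs - 1)) ∧
        ∀ z : ℝ, z = Real.exp (θ + a * (z - 1)) → xs ≤ z) ∧
      Filter.Tendsto
        (fun t : ℕ => (1 / (t : ℝ)) * ∑ s ∈ Finset.range t, ν * (Real.exp (f s) - 1))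
        Filter.atTop (nhds (ν * (xs - 1))) :=
  limiting_log_mgf_general a ν θ ha hθ f hf0 hfr
end

section
/- Let ℓ be a nonnegative random variable with a := ||α||₁ > 0, aE[ℓ] < 1, and E[e^{caℓ}] < ∞ for all c in some interval [0, M), with the map x ↦ E[e^{aℓ(x-1)}] finite near 1. Then the function θ ↦ (minimal solution x*(θ) of x = E[e^{θ + aℓ(x-1)}]) is strictly increasing in θ on the set where a solution exists. -/
open MeasureTheory

theorem minimal_solution_strict_mono (Ω : Type*) [MeasurableSpace Ω] (μ : Measure Ω)
    [IsProbabilityMeasure μ]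
    (ℓ : Ω → ℝ) (hm : Measurable ℓ) (hnn : 0 ≤ᵐ[μ] ℓ)
    (a : ℝ) (ha : 0 < a) (hmean : Integrable ℓ μ) (hsub : a * ∫ ω, ℓ ω ∂μ < 1)
    (M : ℝ) (hM : 0 < M)
    (hInt : ∀ c ∈ Set.Ico (0 : ℝ) M, Integrable (fun ω => Real.exp (c * (a * ℓ ω))) μ)
    (θ₁ θ₂ x₁ x₂ : ℝ) (hθ : θ₁ < θ₂)
    (h₁ : x₁ = ∫ ω, Real.exp (θ₁ + a * ℓ ω * (x₁ - 1)) ∂μ ∧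
      ∀ z : ℝ, z = ∫ ω, Real.exp (θ₁ + a * ℓ ω * (z - 1)) ∂μ → x₁ ≤ z)
    (h₂ : x₂ = ∫ ω, Real.exp (θ₂ + a * ℓ ω * (x₂ - 1)) ∂μ ∧
      ∀ z : ℝ, z = ∫ ω, Real.exp (θ₂ + a * ℓ ω * (z - 1)) ∂μ → x₂ ≤ z) :
    x₁ < x₂ := by
  obtain ⟨he₁, hmin₁⟩ := h₁
  obtain ⟨he₂, -⟩ := h₂
  have hmeas : ∀ θ x : ℝ,
      AEStronglyMeasurable (fun ω => Real.exp (θ + a * ℓ ω * (x - 1))) μ := fun θ x =>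
    ((measurable_const.add ((measurable_const.mul hm).mul measurable_const)).exp).aestronglyMeasurable
  -- integrability of the integrand at θ₂, x₂
  have hint2 : Integrable (fun ω => Real.exp (θ₂ + a * ℓ ω * (x₂ - 1))) μ := by
    by_cases hx : x₂ ≤ 1
    · apply Integrable.mono' (integrable_const (Real.exp θ₂)) (hmeas θ₂ x₂)
      filter_upwards [hnn] with ω hω
      rw [Real.norm_eq_abs, abs_of_pos (Real.exp_pos _)]
      apply Real.exp_le_exp.2
      nlinarith [mul_nonneg ha.le hω]
    · by_contra hni
      rw [integral_undef hni] at he₂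
      linarith
  -- integrability of the integrand at θ₁, x₂
  have hrw : (fun ω => Real.exp (θ₁ + a * ℓ ω * (x₂ - 1)))
      = fun ω => Real.exp (θ₁ - θ₂) * Real.exp (θ₂ + a * ℓ ω * (x₂ - 1)) := by
    funext ω; rw [← Real.exp_add]; ring_nf
  have hint1 : Integrable (fun ω => Real.exp (θ₁ + a * ℓ ω * (x₂ - 1))) μ := by
    rw [hrw]; exact hint2.const_mul _
  have hpos : 0 < ∫ ω, Real.exp (θ₁ + a * ℓ ω * (x₂ - 1)) ∂μ := integral_exp_pos hint1
  have hone : (1 : ℝ) < Real.exp (θ₂ - θ₁) := by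
    rw [show (1 : ℝ) = Real.exp 0 from (Real.exp_zero).symm]
    exact Real.exp_lt_exp.2 (by linarith)
  have hswap : (∫ ω, Real.exp (θ₂ + a * ℓ ω * (x₂ - 1)) ∂μ)
      = Real.exp (θ₂ - θ₁) * ∫ ω, Real.exp (θ₁ + a * ℓ ω * (x₂ - 1)) ∂μ := by
    have heq : ∀ ω, Real.exp (θ₂ + a * ℓ ω * (x₂ - 1))
        = Real.exp (θ₂ - θ₁) • Real.exp (θ₁ + a * ℓ ω * (x₂ - 1)) := by
      intro ω; rw [smul_eq_mul, ← Real.exp_add]; ring_nf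
    simp_rw [heq, integral_smul, smul_eq_mul]
  have key : x₂ = Real.exp (θ₂ - θ₁) * ∫ ω, Real.exp (θ₁ + a * ℓ ω * (x₂ - 1)) ∂μ :=
    he₂.trans hswap
  have hFlt : (∫ ω, Real.exp (θ₁ + a * ℓ ω * (x₂ - 1)) ∂μ) < x₂ := by
    nlinarith [mul_pos (by linarith : (0:ℝ) < Real.exp (θ₂ - θ₁) - 1) hpos]
  -- the fixed-point map at θ₁
  set F : ℝ → ℝ := fun x => ∫ ω, Real.exp (θ₁ + a * ℓ ω * (x - 1)) ∂μ with hF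
  set c : ℝ := min x₂ 0 - 1 with hc
  have hcx : c ≤ x₂ := by
    have := min_le_left x₂ 0; linarith
  have hcneg : c < 0 := by
    have := min_le_right x₂ 0; linarith
  set b : ℝ := max (x₂ - 1) 0 with hb
  have hbound : Integrable (fun ω => Real.exp (θ₁ + a * ℓ ω * b)) μ := by
    by_cases hx : x₂ ≤ 1
    · have hb0 : b = 0 := max_eq_right (by linarith)
      simp [hb0]
    · have hb0 : b = x₂ - 1 := max_eq_left (by linarith)
      rw [hb0]; exact hint1
  have hcont : ContinuousOn F (Set.Icc c x₂) := by
    intro x₀ hx₀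
    apply continuousWithinAt_of_dominated
      (bound := fun ω => Real.exp (θ₁ + a * ℓ ω * b))
    · exact Filter.Eventually.of_forall fun x => hmeas θ₁ x
    · have : ∀ x ∈ Set.Icc c x₂, ∀ᵐ ω ∂μ,
          ‖Real.exp (θ₁ + a * ℓ ω * (x - 1))‖ ≤ Real.exp (θ₁ + a * ℓ ω * b) := by
        intro x hx
        filter_upwards [hnn] with ω hω
        rw [Real.norm_eq_abs, abs_of_pos (Real.exp_pos _)]
        apply Real.exp_le_exp.2
        have h1 : x - 1 ≤ b := by
          have := hx.2
          have := le_max_left (x₂ - 1) (0 : ℝ)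
          linarith
        have := mul_nonneg ha.le hω
        nlinarith
      exact eventually_nhdsWithin_of_forall this
    · exact hbound
    · refine Filter.Eventually.of_forall fun ω => Continuous.continuousWithinAt ?_
      fun_prop
  have hcontH : ContinuousOn (fun x => F x - x) (Set.Icc c x₂) :=
    hcont.sub continuousOn_id
  have hHc : 0 ≤ F c - c := by
    have : 0 ≤ F c := integral_nonneg fun ω => (Real.exp_pos _).le
    linarith
  have hHx2 : F x₂ - x₂ < 0 := by simpa [hF] using sub_neg.2 hFlt
  have hmem : (0 : ℝ) ∈ Set.Icc (F x₂ - x₂) (F c - c) := ⟨hHx2.le, hHc⟩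
  obtain ⟨z, hz, hz0⟩ := intermediate_value_Icc' hcx hcontH hmem
  have hz0' : F z - z = 0 := hz0
  have hzfix : z = ∫ ω, Real.exp (θ₁ + a * ℓ ω * (z - 1)) ∂μ := by
    have hzz : F z = z := by linarith
    simpa [hF] using hzz.symm
  have hx1z : x₁ ≤ z := hmin₁ z hzfix
  have hzne : z ≠ x₂ := by
    intro h
    rw [h] at hz0'
    linarith
  exact lt_of_le_of_lt hx1z (lt_of_le_of_ne hz.2 hzne)
end
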